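/- arXiv:1808.03186 — 6 statements merged into one kernel-verified Lean document; each statement's English description precedes it below -/
import Mathlib

section
/- Let Ω be a finite probability space with reference measure P̃ giving positive mass to every point, let S_N : Ω → A be a random variable with finite range A, and let ν be a probability measure on A with ν(x) > 0 for all x in the range of S_N under P̃. Define the minimal measure P^ν(ω) = Σ_{x∈A} P̃(ω | S_N = x) ν(x). Then for every convex function φ : ℝ → ℝ and every probability measure Q on Ω equivalent to P̃ with Q(S_N = x) = ν(x) for all x ∈ A, one has E_{P̃}[φ(dP^ν/dP̃)] ≤ E_{P̃}[φ(dQ/dP̃)]. -/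
open Finset

/-- The minimal measure `P^ν` minimizes `E_{P̃}[φ(dQ/dP̃)]` over all
probability measures `Q` equivalent to `P̃` with law of `S_N` equal to `ν`,
for every convex function `φ`. -/
theorem stmt_0 {Ω A : Type*} [Fintype Ω] [Fintype A] [DecidableEq A]
    (Pt : Ω → ℝ) (hPt : ∀ ω, 0 < Pt ω) (hPt1 : ∑ ω, Pt ω = 1)
    (S : Ω → A) (ν : A → ℝ) (hν : ∀ a, 0 ≤ ν a) (hν1 : ∑ a, ν a = 1)
    (hνpos : ∀ ω, 0 < ν (S ω))
    (Pν : Ω → ℝ)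
    (hPν : ∀ ω, Pν ω = ∑ a, (if S ω = a then Pt ω / (∑ ω' ∈ univ.filter (fun ω' => S ω' = a), Pt ω') else 0) * ν a)
    (φ : ℝ → ℝ) (hφ : ConvexOn ℝ Set.univ φ)
    (Q : Ω → ℝ) (hQ : ∀ ω, 0 < Q ω) (hQ1 : ∑ ω, Q ω = 1)
    (hQν : ∀ a, ∑ ω ∈ univ.filter (fun ω => S ω = a), Q ω = ν a) :
    ∑ ω, Pt ω * φ (Pν ω / Pt ω) ≤ ∑ ω, Pt ω * φ (Q ω / Pt ω) := by
  set Z : A → ℝ := fun a => ∑ ω' ∈ univ.filter (fun ω' => S ω' = a), Pt ω' with hZ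
  have hPν' : ∀ ω, Pν ω / Pt ω = ν (S ω) / Z (S ω) := by
    intro ω
    have : Pν ω = Pt ω / Z (S ω) * ν (S ω) := by
      rw [hPν ω, Finset.sum_eq_single (S ω)]
      · simp [hZ]
      · intro b _ hb; simp [Ne.symm hb]
      · simp
    rw [this, div_eq_iff (hPt ω).ne']
    ring
  rw [← Finset.sum_fiberwise univ S (fun ω => Pt ω * φ (Pν ω / Pt ω)),
      ← Finset.sum_fiberwise univ S (fun ω => Pt ω * φ (Q ω / Pt ω))]
  apply Finset.sum_le_sum
  intro a _
  by_cases hne : (univ.filter (fun ω => S ω = a)).Nonempty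
  · have hZpos : 0 < Z a := Finset.sum_pos (fun ω _ => hPt ω) hne
    have hLHS : ∑ ω ∈ univ.filter (fun ω => S ω = a), Pt ω * φ (Pν ω / Pt ω)
        = Z a * φ (ν a / Z a) := by
      rw [hZ, Finset.sum_mul]
      apply Finset.sum_congr rfl
      intro ω hω
      have hSω : S ω = a := (Finset.mem_filter.mp hω).2
      rw [hPν' ω, hSω]
    rw [hLHS]
    have hw : ∀ ω ∈ univ.filter (fun ω => S ω = a), 0 ≤ Pt ω / Z a := by
      intro ω _; exact div_nonneg (hPt ω).le hZpos.le
    have hw1 : ∑ ω ∈ univ.filter (fun ω => S ω = a), Pt ω / Z a = 1 := by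
      rw [← Finset.sum_div]
      exact div_self hZpos.ne'
    have hjensen := hφ.map_sum_le (t := univ.filter (fun ω => S ω = a))
      (p := fun ω => Q ω / Pt ω) hw hw1 (by intro i _; trivial)
    have hsum : ∑ ω ∈ univ.filter (fun ω => S ω = a), (Pt ω / Z a) • (Q ω / Pt ω)
        = ν a / Z a := by
      rw [← hQν a, Finset.sum_div]
      apply Finset.sum_congr rfl
      intro ω _
      rw [smul_eq_mul, div_mul_div_comm, mul_comm (Pt ω) (Q ω),
        mul_div_mul_right _ _ (hPt ω).ne']
    rw [hsum] at hjensen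
    calc Z a * φ (ν a / Z a)
        ≤ Z a * ∑ ω ∈ univ.filter (fun ω => S ω = a), (Pt ω / Z a) • φ (Q ω / Pt ω) :=
          by exact mul_le_mul_of_nonneg_left hjensen hZpos.le
      _ = ∑ ω ∈ univ.filter (fun ω => S ω = a), Pt ω * φ (Q ω / Pt ω) := by
          rw [Finset.mul_sum]
          apply Finset.sum_congr rfl
          intro ω _
          rw [smul_eq_mul, ← mul_assoc, mul_comm (Z a),
            div_mul_cancel₀ _ hZpos.ne']
  · rw [Finset.not_nonempty_iff_eq_empty] at hne
    simp [hne]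
end

section
/- In a complete one-period market with finite sample space Ω = {ω₁,…,ω_M}, unique equivalent martingale measure P̃, and a strictly concave, strictly increasing, differentiable utility U with U' a bijection from (0,∞) to (0,∞) with inverse I, the terminal wealth maximizing E_Q[U(V)] subject to E_{P̃}[V/(1+r)] = v (with V > 0) is V̂ = I(λ (1+r)^{-1} dP̃/dQ), where λ > 0 is determined by E_{P̃}[(1+r)^{-1} I(λ(1+r)^{-1} dP̃/dQ)] = v. -/
/-- Tangent line inequality for a concave differentiable function on `Ioi 0`. -/
lemma tangent_line_le {U : ℝ → ℝ} (hconc : ConcaveOn ℝ (Set.Ioi 0) U)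
    (hdiff : DifferentiableOn ℝ U (Set.Ioi 0)) {x y : ℝ} (hx : 0 < x) (hy : 0 < y) :
    U x ≤ U y + deriv U y * (x - y) := by
  have hdy : DifferentiableAt ℝ U y := (hdiff y hy).differentiableAt (Ioi_mem_nhds hy)
  rcases lt_trichotomy x y with h | h | h
  · have := hconc.deriv_le_slope hx hy h hdy
    rw [slope_def_field, le_div_iff₀ (by linarith : (0:ℝ) < y - x)] at this
    nlinarith
  · simp [h]
  · have := hconc.slope_le_deriv hy hx h hdy
    rw [slope_def_field, div_le_iff₀ (by linarith : (0:ℝ) < x - y)] at this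
    nlinarith

/-- Martingale method in a complete one-period finite market: the
terminal wealth `V̂ = I(λ(1+r)⁻¹ dP̃/dQ)` with `λ > 0` determined by the budget
constraint maximizes `E_Q[U(V)]` over positive wealths satisfying the budget
constraint `E_{P̃}[V/(1+r)] = v`. -/
theorem stmt_6 {Ω : Type*} [Fintype Ω]
    (Q Pt : Ω → ℝ) (hQ : ∀ ω, 0 < Q ω) (hQ1 : ∑ ω, Q ω = 1)
    (hPt : ∀ ω, 0 < Pt ω) (hPt1 : ∑ ω, Pt ω = 1)
    (r v : ℝ) (hr : r > -1) (hv : 0 < v)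
    (U I : ℝ → ℝ)
    (hUconc : StrictConcaveOn ℝ (Set.Ioi 0) U)
    (hUmono : StrictMonoOn U (Set.Ioi 0))
    (hUdiff : DifferentiableOn ℝ U (Set.Ioi 0))
    (hU0 : Filter.Tendsto (deriv U) (nhdsWithin 0 (Set.Ioi 0)) Filter.atTop)
    (hUinf : Filter.Tendsto (deriv U) Filter.atTop (nhds 0))
    (hI : ∀ y : ℝ, 0 < y → 0 < I y ∧ deriv U (I y) = y)
    (lam : ℝ) (hlam : 0 < lam)
    (hbudget : ∑ ω, Pt ω * ((1 + r)⁻¹ * I (lam * (1 + r)⁻¹ * (Pt ω / Q ω))) = v) :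
    ∀ V : Ω → ℝ, (∀ ω, 0 < V ω) → ∑ ω, Pt ω * (V ω / (1 + r)) = v →
      ∑ ω, Q ω * U (V ω) ≤ ∑ ω, Q ω * U (I (lam * (1 + r)⁻¹ * (Pt ω / Q ω))) := by
  intro V hV hVb
  have h1r : (0:ℝ) < 1 + r := by linarith
  set Vh : Ω → ℝ := fun ω => I (lam * (1 + r)⁻¹ * (Pt ω / Q ω)) with hVh
  have hy : ∀ ω, 0 < lam * (1 + r)⁻¹ * (Pt ω / Q ω) := fun ω => by
    have := hPt ω; have := hQ ω; positivity
  have key : ∀ ω, Q ω * U (V ω) ≤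
      Q ω * U (Vh ω) + lam * (1 + r)⁻¹ * (Pt ω * (V ω - Vh ω)) := by
    intro ω
    obtain ⟨hpos, hder⟩ := hI _ (hy ω)
    have htan := tangent_line_le hUconc.concaveOn hUdiff (hV ω) hpos
    rw [hder] at htan
    have h2 := mul_le_mul_of_nonneg_left htan (hQ ω).le
    have hne : Q ω ≠ 0 := (hQ ω).ne'
    calc Q ω * U (V ω)
        ≤ Q ω * (U (Vh ω) + lam * (1 + r)⁻¹ * (Pt ω / Q ω) * (V ω - Vh ω)) := h2
      _ = Q ω * U (Vh ω) + lam * (1 + r)⁻¹ * (Pt ω * (V ω - Vh ω)) := by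
          field_simp
  have hs : (∑ ω, lam * (1 + r)⁻¹ * (Pt ω * (V ω - Vh ω))) = 0 := by
    have heq : ∀ ω : Ω, lam * (1 + r)⁻¹ * (Pt ω * (V ω - Vh ω)) =
        lam * (Pt ω * (V ω / (1 + r))) - lam * (Pt ω * ((1 + r)⁻¹ * Vh ω)) := by
      intro ω; field_simp
    simp_rw [heq, Finset.sum_sub_distrib, ← Finset.mul_sum, hVb]
    rw [show (∑ ω, Pt ω * ((1 + r)⁻¹ * Vh ω)) = v from hbudget, sub_self]
  calc ∑ ω, Q ω * U (V ω)
      ≤ ∑ ω, (Q ω * U (Vh ω) + lam * (1 + r)⁻¹ * (Pt ω * (V ω - Vh ω))) :=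
        Finset.sum_le_sum fun ω _ => key ω
    _ = (∑ ω, Q ω * U (Vh ω)) + ∑ ω, lam * (1 + r)⁻¹ * (Pt ω * (V ω - Vh ω)) :=
        Finset.sum_add_distrib
    _ = ∑ ω, Q ω * U (Vh ω) := by rw [hs, add_zero]
end

section
/- In an N-period binomial model under a measure Q for which the up/down steps form a time-homogeneous Markov chain on stock prices, if the terminal distribution assigns probability ν_i to the price s(1+h)^{N−i}(1−k)^i, and Q equals the minimal measure P^ν built from the risk-neutral measure P̃ (i.i.d. up-probability p̃), then the last-period transition probabilities are Q(S_N = (1+h)S_{N−1} | S_{N−1} = s(1+h)^{N−1−i}(1−k)^i) = (N−i)ν_i / ((N−i)ν_i + (i+1)ν_{i+1}) for each i ∈ {0,…,N−1}. -/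
open Finset

lemma aux_count (n j : ℕ) :
    (univ.filter (fun ω : Fin n → Bool =>
      (univ.filter (fun t => ω t = false)).card = j)).card = n.choose j := by
  have h1 : n.choose j = ((univ : Finset (Fin n)).powersetCard j).card := by
    rw [card_powersetCard, card_univ, Fintype.card_fin]
  rw [h1]
  apply card_nbij' (fun ω => univ.filter (fun t => ω t = false))
    (fun s => fun t => decide (t ∉ s))
  · intro ω hω
    simp only [mem_coe, mem_filter, mem_univ, true_and] at hω
    rw [mem_coe, mem_powersetCard_univ]
    exact hω
  · intro s hs
    rw [mem_coe, mem_powersetCard_univ] at hs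
    simp only [mem_coe, mem_filter, mem_univ, true_and, decide_eq_false_iff_not, not_not]
    rwa [filter_mem_eq_inter, univ_inter]
  · intro ω _
    funext t
    simp only [mem_filter, mem_univ, true_and]
    cases hωt : ω t <;> simp [hωt]
  · intro s _
    simp only [decide_eq_false_iff_not, not_not]
    rw [filter_mem_eq_inter, univ_inter]

lemma final_algebra (a b ci ci1 n1 i1 : ℝ) (ha : 0 < a) (hb : 0 < b) (hci : 0 < ci)
    (hci1 : 0 < ci1) (hn1 : 0 < n1) (hi1 : 0 < i1) (key : ci1 * i1 = ci * n1) :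
    (a / ci) / (a / ci + b / ci1) = n1 * a / (n1 * a + i1 * b) := by
  have h1 : 0 < a / ci + b / ci1 := by positivity
  have h2 : 0 < n1 * a + i1 * b := by positivity
  rw [div_eq_div_iff h1.ne' h2.ne']
  field_simp
  linear_combination b * key

lemma aux_card_lt (n m : ℕ) (hm : m ≤ n) :
    (univ.filter (fun t : Fin n => (t : ℕ) < m)).card = m := by
  have : univ.filter (fun t : Fin n => (t : ℕ) < m)
      = (range m).attachFin (fun x hx => lt_of_lt_of_le (mem_range.1 hx) hm) := by
    ext t; simp [mem_attachFin]
  rw [this, card_attachFin, card_range]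

/-- In the N-period binomial model, under the minimal measure `P^ν`
(built by conditioning the i.i.d. risk-neutral measure `P̃` on the terminal
distribution `ν`), the last-period up-transition probabilities are
`(N-i)ν_i / ((N-i)ν_i + (i+1)ν_{i+1})`. -/
theorem stmt_12 (N : ℕ) (hN : 0 < N) (r h k : ℝ) (hhr : h > r) (hrk : r > -k)
    (p : ℝ) (hp : p = (r + k) / (h + k))
    (ν : ℕ → ℝ) (hν : ∀ i, i ≤ N → 0 < ν i) (hν1 : ∑ i ∈ range (N + 1), ν i = 1)
    (i : ℕ) (hi : i < N) :
    -- number of down-moves in a full path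
    let d : (Fin N → Bool) → ℕ := fun ω => (univ.filter (fun t => ω t = false)).card
    -- number of down-moves among the first N-1 periods
    let dpref : (Fin N → Bool) → ℕ :=
      fun ω => (univ.filter (fun t : Fin N => (t : ℕ) < N - 1 ∧ ω t = false)).card
    -- i.i.d. risk-neutral measure with up-probability p
    let Pt : (Fin N → Bool) → ℝ := fun ω => p ^ (N - d ω) * (1 - p) ^ (d ω)
    -- minimal measure: P̃ conditioned on the terminal price, reweighted by ν
    let Pν : (Fin N → Bool) → ℝ := fun ω =>
      Pt ω * ν (d ω) / (∑ ω' ∈ univ.filter (fun ω' => d ω' = d ω), Pt ω')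
    (∑ ω ∈ univ.filter (fun ω : Fin N → Bool =>
        dpref ω = i ∧ ω ⟨N - 1, by omega⟩ = true), Pν ω) /
      (∑ ω ∈ univ.filter (fun ω : Fin N → Bool => dpref ω = i), Pν ω)
    = ((N : ℝ) - i) * ν i / (((N : ℝ) - i) * ν i + ((i : ℝ) + 1) * ν (i + 1)) := by
  intro d dpref Pt Pν
  have hiN : i ≤ N := le_of_lt hi
  have hi1N : i + 1 ≤ N := hi
  have hhk : (0:ℝ) < h + k := by linarith
  have hp0 : 0 < p := by rw [hp]; apply div_pos <;> linarith
  have hp1 : p < 1 := by rw [hp, div_lt_one hhk]; linarith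
  set last : Fin N := ⟨N - 1, by omega⟩ with hlast
  -- d ≤ N
  have hdN : ∀ ω : Fin N → Bool, d ω ≤ N := by
    intro ω
    calc d ω ≤ (univ : Finset (Fin N)).card := card_filter_le _ _
    _ = N := by rw [card_univ, Fintype.card_fin]
  -- splitting d into prefix count plus last-step indicator
  have hdsplit : ∀ ω : Fin N → Bool,
      d ω = dpref ω + (if ω last = false then 1 else 0) := by
    intro ω
    show (univ.filter (fun t : Fin N => ω t = false)).card = _
    have hset : univ.filter (fun t : Fin N => ω t = false)
        = univ.filter (fun t : Fin N => (t : ℕ) < N - 1 ∧ ω t = false)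
          ∪ univ.filter (fun t : Fin N => (t : ℕ) = N - 1 ∧ ω t = false) := by
      rw [← filter_or]
      apply filter_congr
      intro t _
      have ht : (t : ℕ) < N - 1 ∨ (t : ℕ) = N - 1 := by have := t.isLt; omega
      constructor
      · intro hω; rcases ht with h' | h'
        · exact Or.inl ⟨h', hω⟩
        · exact Or.inr ⟨h', hω⟩
      · rintro (⟨_, hω⟩ | ⟨_, hω⟩) <;> exact hω
    rw [hset, card_union_of_disjoint]
    · congr 1
      by_cases hω : ω last = false
      · rw [if_pos hω]
        have : univ.filter (fun t : Fin N => (t : ℕ) = N - 1 ∧ ω t = false) = {last} := by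
          ext t
          simp only [mem_filter, mem_univ, true_and, mem_singleton]
          constructor
          · rintro ⟨h1, _⟩; exact Fin.ext h1
          · rintro rfl; exact ⟨rfl, hω⟩
        rw [this, card_singleton]
      · rw [if_neg hω]
        have : univ.filter (fun t : Fin N => (t : ℕ) = N - 1 ∧ ω t = false) = ∅ := by
          rw [filter_eq_empty_iff]
          rintro t _ ⟨h1, h2⟩
          have : t = last := Fin.ext h1
          subst this
          exact hω h2
        rw [this, card_empty]
    · rw [disjoint_left]
      rintro t h1 h2
      simp only [mem_filter, mem_univ, true_and] at h1 h2
      omega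
  have hd_up : ∀ ω : Fin N → Bool, dpref ω = i → ω last = true → d ω = i := by
    intro ω h1 h2; rw [hdsplit, h1, h2]; simp
  have hd_dn : ∀ ω : Fin N → Bool, dpref ω = i → ω last = false → d ω = i + 1 := by
    intro ω h1 h2; rw [hdsplit, h1, h2]; simp
  -- count of paths with a given number of downs
  have hcount : ∀ j, (univ.filter (fun ω : Fin N → Bool => d ω = j)).card = N.choose j :=
    fun j => aux_count N j
  -- the normalizing sums
  have hZ : ∀ j, (∑ ω' ∈ univ.filter (fun ω' : Fin N → Bool => d ω' = j), Pt ω')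
      = (N.choose j : ℝ) * (p ^ (N - j) * (1 - p) ^ j) := by
    intro j
    have hconst : ∀ ω' ∈ univ.filter (fun ω' : Fin N → Bool => d ω' = j),
        Pt ω' = p ^ (N - j) * (1 - p) ^ j := by
      intro ω' hω'
      simp only [mem_filter, mem_univ, true_and] at hω'
      show p ^ (N - d ω') * (1 - p) ^ (d ω') = _
      rw [hω']
    rw [sum_congr rfl hconst, sum_const, hcount, nsmul_eq_mul]
  -- pointwise value of the minimal measure
  have hPν : ∀ ω : Fin N → Bool, Pν ω = ν (d ω) / (N.choose (d ω) : ℝ) := by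
    intro ω
    have hpow : 0 < p ^ (N - d ω) * (1 - p) ^ (d ω) :=
      mul_pos (pow_pos hp0 _) (pow_pos (by linarith) _)
    have hch : (0:ℝ) < (N.choose (d ω) : ℝ) := by
      exact_mod_cast Nat.choose_pos (hdN ω)
    show p ^ (N - d ω) * (1 - p) ^ (d ω) * ν (d ω)
        / (∑ ω' ∈ univ.filter (fun ω' : Fin N → Bool => d ω' = d ω), Pt ω') = _
    rw [hZ (d ω)]
    field_simp
    exact mul_div_cancel_left₀ _ (pow_ne_zero _ (sub_pos.2 hp1).ne')
  -- the two events
  set A := univ.filter (fun ω : Fin N → Bool => dpref ω = i ∧ ω last = true) with hA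
  set B := univ.filter (fun ω : Fin N → Bool => dpref ω = i ∧ ω last = false) with hB
  have hC : univ.filter (fun ω : Fin N → Bool => dpref ω = i) = A ∪ B := by
    rw [hA, hB, ← filter_or]
    apply filter_congr
    intro ω _
    constructor
    · intro h1
      cases hb : ω last
      · exact Or.inr ⟨h1, rfl⟩
      · exact Or.inl ⟨h1, rfl⟩
    · rintro (⟨h1, _⟩ | ⟨h1, _⟩) <;> exact h1
  have hABdisj : Disjoint A B := by
    rw [disjoint_left]
    rintro ω h1 h2
    rw [hA, mem_filter] at h1
    rw [hB, mem_filter] at h2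
    rw [h1.2.2] at h2
    exact absurd h2.2.2 (by simp)
  -- A and B have the same cardinality (flip the last bit)
  have hdpref_upd : ∀ ω : Fin N → Bool, ∀ b : Bool,
      dpref (Function.update ω last b) = dpref ω := by
    intro ω b
    show (univ.filter _).card = (univ.filter _).card
    congr 1
    apply filter_congr
    intro t _
    by_cases ht : (t : ℕ) < N - 1
    · have htne : t ≠ last := by
        intro hteq
        rw [hteq] at ht
        simp only [hlast] at ht
        omega
      rw [Function.update_of_ne htne]
    · simp [ht]
  have hcardAB : A.card = B.card := by
    apply card_nbij' (fun ω => Function.update ω last (!ω last))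
      (fun ω => Function.update ω last (!ω last))
    · intro ω hω
      rw [mem_coe, hA, mem_filter] at hω
      rw [mem_coe, hB, mem_filter]
      refine ⟨mem_univ _, ?_, ?_⟩
      · rw [hdpref_upd]; exact hω.2.1
      · beta_reduce; rw [Function.update_self, hω.2.2]; rfl
    · intro ω hω
      rw [mem_coe, hB, mem_filter] at hω
      rw [mem_coe, hA, mem_filter]
      refine ⟨mem_univ _, ?_, ?_⟩
      · rw [hdpref_upd]; exact hω.2.1
      · beta_reduce; rw [Function.update_self, hω.2.2]; rfl
    · intro ω _
      funext t
      by_cases ht : t = last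
      · subst ht
        simp [Function.update_self]
      · simp [Function.update_of_ne ht]
    · intro ω _
      funext t
      by_cases ht : t = last
      · subst ht
        simp [Function.update_self]
      · simp [Function.update_of_ne ht]
  -- A is nonempty
  have hAne : 0 < A.card := by
    rw [card_pos]
    refine ⟨fun t => decide (i ≤ (t : ℕ)), ?_⟩
    rw [hA, mem_filter]
    refine ⟨mem_univ _, ?_, ?_⟩
    · show (univ.filter (fun t : Fin N =>
          (t : ℕ) < N - 1 ∧ decide (i ≤ (t : ℕ)) = false)).card = i
      have hsame : univ.filter (fun t : Fin N =>
          (t : ℕ) < N - 1 ∧ decide (i ≤ (t : ℕ)) = false)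
          = univ.filter (fun t : Fin N => (t : ℕ) < i) := by
        apply filter_congr
        intro t _
        simp only [decide_eq_false_iff_not, not_le, eq_iff_iff]
        omega
      rw [hsame, aux_card_lt N i hiN]
    · show decide (i ≤ ((last : Fin N) : ℕ)) = true
      simp only [hlast]
      rw [decide_eq_true_iff]
      omega
  -- compute the sums
  have hSA : ∑ ω ∈ A, Pν ω = (A.card : ℝ) * (ν i / (N.choose i : ℝ)) := by
    rw [sum_congr rfl (fun ω hω => ?_), sum_const, nsmul_eq_mul]
    rw [hA, mem_filter] at hω
    rw [hPν, hd_up ω hω.2.1 hω.2.2]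
  have hSB : ∑ ω ∈ B, Pν ω = (A.card : ℝ) * (ν (i + 1) / (N.choose (i + 1) : ℝ)) := by
    rw [sum_congr rfl (fun ω hω => ?_), sum_const, nsmul_eq_mul, hcardAB]
    rw [hB, mem_filter] at hω
    rw [hPν, hd_dn ω hω.2.1 hω.2.2]
  rw [hC, sum_union hABdisj, hSA, hSB]
  -- final algebra
  have hm : (0:ℝ) < (A.card : ℝ) := by exact_mod_cast hAne
  have hci : (0:ℝ) < (N.choose i : ℝ) := by exact_mod_cast Nat.choose_pos hiN
  have hci1 : (0:ℝ) < (N.choose (i + 1) : ℝ) := by exact_mod_cast Nat.choose_pos hi1N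
  have hνi : 0 < ν i := hν i hiN
  have hνi1 : 0 < ν (i + 1) := hν (i + 1) hi1N
  have hNi : (0:ℝ) < (N : ℝ) - i := by
    have : (i : ℝ) < (N : ℝ) := by exact_mod_cast hi
    linarith
  have key : (N.choose (i + 1) : ℝ) * ((i : ℝ) + 1) = (N.choose i : ℝ) * ((N : ℝ) - i) := by
    rw [show ((N : ℝ) - i) = ((N - i : ℕ) : ℝ) from (Nat.cast_sub hiN).symm]
    exact_mod_cast Nat.choose_succ_right_eq N i
  rw [← mul_add, mul_div_mul_left _ _ (ne_of_gt hm)]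
  exact final_algebra _ _ _ _ _ _ hνi hνi1 hci hci1 hNi (by positivity) key
end

section
/- In the N-period binomial model with P^ν defined as the conditioning of the i.i.d. risk-neutral measure P̃ on the terminal distribution ν, the stock price process (S_n)_{0≤n≤N} is a Markov chain under P^ν. -/
open Finset

lemma count_split (N n : ℕ) (hn : n ≤ N) (σ : Fin n → Bool) (ω : Fin N → Bool)
    (hext : ∀ t : Fin n, ω (Fin.castLE hn t) = σ t) :
    (univ.filter fun t : Fin N => ω t = false).card =
      (univ.filter fun t : Fin n => σ t = false).card +
      (univ.filter fun t : Fin N => ω t = false ∧ n ≤ (t : ℕ)).card := by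
  classical
  have hsplit := Finset.card_filter_add_card_filter_not
    (s := univ.filter fun t : Fin N => ω t = false) (p := fun t => (t : ℕ) < n)
  rw [Finset.filter_filter, Finset.filter_filter] at hsplit
  have h1 : (univ.filter fun t : Fin N => ω t = false ∧ (t : ℕ) < n).card =
      (univ.filter fun t : Fin n => σ t = false).card := by
    refine Finset.card_bij' (fun t ht => (⟨(t : ℕ), by
        simp only [mem_filter] at ht; exact ht.2.2⟩ : Fin n))
      (fun t _ => Fin.castLE hn t) ?_ ?_ ?_ ?_
    · intro t ht
      simp only [mem_filter, mem_univ, true_and] at ht ⊢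
      rw [← hext ⟨(t : ℕ), ht.2⟩]
      have : Fin.castLE hn (⟨(t : ℕ), ht.2⟩ : Fin n) = t := by ext; rfl
      rw [this]; exact ht.1
    · intro t ht
      simp only [mem_filter, mem_univ, true_and] at ht ⊢
      exact ⟨by rw [hext t]; exact ht, t.isLt⟩
    · intro t ht; ext; rfl
    · intro t ht; ext; rfl
  have h2 : (univ.filter fun t : Fin N => ω t = false ∧ ¬ (t : ℕ) < n) =
      (univ.filter fun t : Fin N => ω t = false ∧ n ≤ (t : ℕ)) := by
    apply filter_congr; intro t _; simp [Nat.not_lt]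
  rw [h1, h2] at hsplit
  omega

lemma key_sum (N n : ℕ) (hn : n ≤ N) (f : (Fin N → Bool) → ℝ)
    (hf : ∀ ω ω' : Fin N → Bool,
      (univ.filter fun t => ω t = false).card = (univ.filter fun t => ω' t = false).card →
      f ω = f ω')
    (σ σ' : Fin n → Bool)
    (hσ : (univ.filter fun t => σ t = false).card = (univ.filter fun t => σ' t = false).card)
    (P : (Fin N → Bool) → Prop) [DecidablePred P]
    (hP : ∀ ω ω' : Fin N → Bool, (∀ t : Fin N, n ≤ (t : ℕ) → ω t = ω' t) → (P ω ↔ P ω')) :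
    ∑ ω ∈ univ.filter (fun ω : Fin N → Bool =>
        (∀ t : Fin n, ω (Fin.castLE hn t) = σ t) ∧ P ω), f ω
    = ∑ ω ∈ univ.filter (fun ω : Fin N → Bool =>
        (∀ t : Fin n, ω (Fin.castLE hn t) = σ' t) ∧ P ω), f ω := by
  classical
  have tail_eq : ∀ (τ : Fin n → Bool) (ω : Fin N → Bool) (t : Fin N), n ≤ (t : ℕ) →
      (fun s : Fin N => if h : (s : ℕ) < n then τ ⟨(s : ℕ), h⟩ else ω s) t = ω t := by
    intro τ ω t ht; simp [Nat.not_lt.mpr ht]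
  have pre_eq : ∀ (τ : Fin n → Bool) (ω : Fin N → Bool) (t : Fin n),
      (fun s : Fin N => if h : (s : ℕ) < n then τ ⟨(s : ℕ), h⟩ else ω s) (Fin.castLE hn t)
        = τ t := by
    intro τ ω t
    simp only [Fin.coe_castLE, t.isLt, dif_pos]
  refine Finset.sum_bij'
    (fun ω _ => fun s : Fin N => if h : (s : ℕ) < n then σ' ⟨(s : ℕ), h⟩ else ω s)
    (fun ω _ => fun s : Fin N => if h : (s : ℕ) < n then σ ⟨(s : ℕ), h⟩ else ω s)
    ?_ ?_ ?_ ?_ ?_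
  · intro ω hω
    simp only [mem_filter, mem_univ, true_and] at hω ⊢
    exact ⟨pre_eq σ' ω, (hP _ ω (tail_eq σ' ω)).mpr hω.2⟩
  · intro ω hω
    simp only [mem_filter, mem_univ, true_and] at hω ⊢
    exact ⟨pre_eq σ ω, (hP _ ω (tail_eq σ ω)).mpr hω.2⟩
  · intro ω hω
    simp only [mem_filter, mem_univ, true_and] at hω
    funext t
    by_cases ht : (t : ℕ) < n
    · simp only [dif_pos ht]
      have := hω.1 ⟨(t : ℕ), ht⟩
      have hc : Fin.castLE hn (⟨(t : ℕ), ht⟩ : Fin n) = t := by ext; rfl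
      rw [hc] at this; rw [this]
    · simp only [dif_neg ht]
  · intro ω hω
    simp only [mem_filter, mem_univ, true_and] at hω
    funext t
    by_cases ht : (t : ℕ) < n
    · simp only [dif_pos ht]
      have := hω.1 ⟨(t : ℕ), ht⟩
      have hc : Fin.castLE hn (⟨(t : ℕ), ht⟩ : Fin n) = t := by ext; rfl
      rw [hc] at this; rw [this]
    · simp only [dif_neg ht]
  · intro ω hω
    simp only [mem_filter, mem_univ, true_and] at hω
    apply hf
    rw [count_split N n hn σ ω hω.1,
      count_split N n hn σ' _ (pre_eq σ' ω), hσ]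
    congr 1
    refine Finset.card_bij' (fun t _ => t) (fun t _ => t) ?_ ?_ (fun _ _ => rfl)
      (fun _ _ => rfl)
    · intro t ht
      simp only [mem_filter, mem_univ, true_and] at ht ⊢
      refine ⟨?_, ht.2⟩
      simpa [Nat.not_lt.mpr ht.2] using ht.1
    · intro t ht
      simp only [mem_filter, mem_univ, true_and] at ht ⊢
      refine ⟨?_, ht.2⟩
      have h1 := ht.1
      simp only [Nat.not_lt.mpr ht.2, dif_neg, not_lt] at h1
      simpa [Nat.not_lt.mpr ht.2] using h1


/-- In the N-period binomial model, the stock price process is a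
Markov chain under the minimal measure `P^ν`: the conditional probability of the
next step given the whole past path depends only on the current price (i.e. only
on the number of down-moves so far). -/
theorem stmt_13 (N : ℕ) (p : ℝ) (hp : 0 < p) (hp1 : p < 1)
    (ν : ℕ → ℝ) (hν : ∀ i, i ≤ N → 0 < ν i) (hν1 : ∑ i ∈ range (N + 1), ν i = 1) :
    let d : (Fin N → Bool) → ℕ := fun ω => (univ.filter (fun t => ω t = false)).card
    let Pt : (Fin N → Bool) → ℝ := fun ω => p ^ (N - d ω) * (1 - p) ^ (d ω)
    let Pν : (Fin N → Bool) → ℝ := fun ω =>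
      Pt ω * ν (d ω) / (∑ ω' ∈ univ.filter (fun ω' => d ω' = d ω), Pt ω')
    ∀ (n : ℕ) (hn : n < N) (σ σ' : Fin n → Bool),
      (univ.filter (fun t => σ t = false)).card =
        (univ.filter (fun t => σ' t = false)).card →
      ∀ b : Bool,
        (∑ ω ∈ univ.filter (fun ω : Fin N → Bool =>
            (∀ t : Fin n, ω (Fin.castLE hn.le t) = σ t) ∧ ω ⟨n, hn⟩ = b), Pν ω) /
          (∑ ω ∈ univ.filter (fun ω : Fin N → Bool =>
            ∀ t : Fin n, ω (Fin.castLE hn.le t) = σ t), Pν ω)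
        = (∑ ω ∈ univ.filter (fun ω : Fin N → Bool =>
            (∀ t : Fin n, ω (Fin.castLE hn.le t) = σ' t) ∧ ω ⟨n, hn⟩ = b), Pν ω) /
          (∑ ω ∈ univ.filter (fun ω : Fin N → Bool =>
            ∀ t : Fin n, ω (Fin.castLE hn.le t) = σ' t), Pν ω) := by
  intro d Pt Pν n hn σ σ' hσ b
  have hf : ∀ ω ω' : Fin N → Bool,
      (univ.filter fun t => ω t = false).card =
        (univ.filter fun t => ω' t = false).card → Pν ω = Pν ω' := by
    intro ω ω' h
    simp only [Pν, Pt, d]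
    simp only [h]
  have hnum := key_sum N n hn.le Pν hf σ σ' hσ (fun ω => ω ⟨n, hn⟩ = b)
    (fun ω ω' hag => iff_of_eq (congrArg (· = b) (hag ⟨n, hn⟩ (le_refl n))))
  have hden := key_sum N n hn.le Pν hf σ σ' hσ (fun _ => True)
    (fun _ _ _ => Iff.rfl)
  simp only [and_true] at hden
  rw [hnum, hden]
end

section
/- In a complete finite market, the value of weak information satisfies the minimax identity u(v,ν) = min over Q ∈ E^ν of max over self-financing portfolios with initial wealth v of E_Q[U(V_N)] = max over self-financing portfolios with initial wealth v of E_{P^ν}[U(V_N)]; that is, the inner maximum is minimized exactly at Q = P^ν. -/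
open Finset

/-- Minimax identity for the value of weak information in a
complete finite market: the map `Q ↦ max_{portfolios} E_Q[U(V_N)]` over
`Q ∈ E^ν` attains its minimum exactly at the minimal measure `P^ν`. By the
martingale method, the inner maximum over self-financing portfolios equals the
supremum over positive terminal wealths `V` with `E_{P̃}[V/(1+r)^N] = v`. -/
theorem stmt_18 {Ω A : Type*} [Fintype Ω] [Fintype A] [DecidableEq A]
    (Pt : Ω → ℝ) (hPt : ∀ ω, 0 < Pt ω) (hPt1 : ∑ ω, Pt ω = 1)
    (S : Ω → A) (ν : A → ℝ) (hν : ∀ a, 0 ≤ ν a) (hν1 : ∑ a, ν a = 1)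
    (hνpos : ∀ ω, 0 < ν (S ω)) (hνsupp : ∀ a, a ∉ Set.range S → ν a = 0)
    (Pν : Ω → ℝ)
    (hPν : ∀ ω, Pν ω = ∑ a, (if S ω = a then
      Pt ω / (∑ ω' ∈ univ.filter (fun ω' => S ω' = a), Pt ω') else 0) * ν a)
    (r v : ℝ) (hr : r > -1) (hv : 0 < v) (N : ℕ)
    (U : ℝ → ℝ)
    (hUconc : StrictConcaveOn ℝ (Set.Ioi 0) U)
    (hUmono : StrictMonoOn U (Set.Ioi 0))
    (hUdiff : DifferentiableOn ℝ U (Set.Ioi 0))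
    (hU0 : Filter.Tendsto (deriv U) (nhdsWithin 0 (Set.Ioi 0)) Filter.atTop)
    (hUinf : Filter.Tendsto (deriv U) Filter.atTop (nhds 0)) :
    -- the set E^ν of admissible measures
    let Eν : Set (Ω → ℝ) := {Q | (∀ ω, 0 < Q ω) ∧ ∑ ω, Q ω = 1 ∧
      ∀ a, ∑ ω ∈ univ.filter (fun ω => S ω = a), Q ω = ν a}
    -- the maximal expected utility under Q over attainable terminal wealths
    let maxU : (Ω → ℝ) → ℝ := fun Q => sSup {x : ℝ | ∃ V : Ω → ℝ,
      (∀ ω, 0 < V ω) ∧ (∑ ω, Pt ω * (V ω / (1 + r) ^ N)) = v ∧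
      x = ∑ ω, Q ω * U (V ω)}
    Pν ∈ Eν ∧ IsLeast (maxU '' Eν) (maxU Pν) := by
  classical
  intro Eν maxU
  -- notation
  set T : A → ℝ := fun a => ∑ ω' ∈ univ.filter (fun ω' => S ω' = a), Pt ω' with hTdef
  set R : ℝ := (1 + r) ^ N with hRdef
  have hR : (0:ℝ) < R := pow_pos (by linarith) N
  -- simplified formula for Pν
  have hPν' : ∀ ω, Pν ω = Pt ω / T (S ω) * ν (S ω) := by
    intro ω
    rw [hPν ω, Finset.sum_eq_single (S ω)]
    · simp
      left
      convert rfl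
    · intro b _ hb
      simp [Ne.symm hb]
    · intro h
      exact absurd (Finset.mem_univ (S ω)) h
  have hTpos : ∀ a, (univ.filter (fun ω => S ω = a)).Nonempty → 0 < T a := by
    intro a ⟨ω0, hω0⟩
    exact Finset.sum_pos' (fun i _ => (hPt i).le) ⟨ω0, hω0, hPt ω0⟩
  have hmemfib : ∀ ω, ω ∈ univ.filter (fun ω' => S ω' = S ω) := by
    intro ω; simp
  have hTposS : ∀ ω, 0 < T (S ω) := fun ω => hTpos (S ω) ⟨ω, hmemfib ω⟩
  -- marginals of Pν
  have hmarg : ∀ a, ∑ ω ∈ univ.filter (fun ω => S ω = a), Pν ω = ν a := by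
    intro a
    by_cases ha : (univ.filter (fun ω => S ω = a)).Nonempty
    · have hTa : 0 < T a := hTpos a ha
      have h1 : ∑ ω ∈ univ.filter (fun ω => S ω = a), Pν ω
          = ∑ ω ∈ univ.filter (fun ω => S ω = a), Pt ω / T a * ν a := by
        refine Finset.sum_congr rfl fun ω hω => ?_
        rw [hPν' ω, (Finset.mem_filter.mp hω).2]
      rw [h1]
      have h2 : ∑ ω ∈ univ.filter (fun ω => S ω = a), Pt ω / T a * ν a
          = (∑ ω ∈ univ.filter (fun ω => S ω = a), Pt ω) / T a * ν a := by
        rw [Finset.sum_div, Finset.sum_mul]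
      rw [h2]
      show T a / T a * ν a = ν a
      rw [div_self hTa.ne', one_mul]
    · have hra : a ∉ Set.range S := by
        rintro ⟨ω, rfl⟩
        exact ha ⟨ω, hmemfib ω⟩
      rw [Finset.not_nonempty_iff_eq_empty.mp ha, Finset.sum_empty, hνsupp a hra]
  have hPνmem : Pν ∈ Eν := by
    refine ⟨fun ω => ?_, ?_, hmarg⟩
    · rw [hPν' ω]
      exact mul_pos (div_pos (hPt ω) (hTposS ω)) (hνpos ω)
    · rw [← Finset.sum_fiberwise univ S Pν]
      simp only [hmarg, hν1]
  -- the feasible set and its basic properties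
  have hfeas0 : ∀ Q : Ω → ℝ, (∑ ω, Q ω = 1) →
      (∑ ω, Pt ω * ((v * R) / R)) = v ∧ True := by
    intro Q hQ; constructor; · rw [mul_div_cancel_right₀ _ hR.ne']; rw [← Finset.sum_mul, hPt1, one_mul]
    · trivial
  -- nonemptiness of the value sets
  have hne : ∀ Q : Ω → ℝ, {x : ℝ | ∃ V : Ω → ℝ,
      (∀ ω, 0 < V ω) ∧ (∑ ω, Pt ω * (V ω / R)) = v ∧
      x = ∑ ω, Q ω * U (V ω)}.Nonempty := by
    intro Q
    refine ⟨∑ ω, Q ω * U (v * R), fun _ => v * R, fun _ => mul_pos hv hR, ?_, rfl⟩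
    rw [show (fun _ : Ω => v * R) = fun _ : Ω => v * R from rfl]
    calc ∑ ω, Pt ω * (v * R / R) = ∑ ω, Pt ω * v := by
          rw [mul_div_cancel_right₀ _ hR.ne']
      _ = v := by rw [← Finset.sum_mul, hPt1, one_mul]
  -- bound on feasible V
  have hVbd : ∀ V : Ω → ℝ, (∀ ω, 0 < V ω) → (∑ ω, Pt ω * (V ω / R)) = v →
      ∀ ω, V ω ≤ v * R / Pt ω := by
    intro V hVpos hVbud ω
    have h1 : Pt ω * (V ω / R) ≤ v := by
      rw [← hVbud]
      exact Finset.single_le_sum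
        (fun i _ => mul_nonneg (hPt i).le (div_nonneg (hVpos i).le hR.le)) (Finset.mem_univ ω)
    have h2 : Pt ω * V ω ≤ v * R := by
      rw [mul_div_assoc'] at h1
      exact (div_le_iff₀ hR).mp h1
    rw [le_div_iff₀ (hPt ω)]
    nlinarith [h2]
  -- boundedness above of value sets (for nonnegative Q)
  have hbdd : ∀ Q : Ω → ℝ, (∀ ω, 0 ≤ Q ω) → BddAbove {x : ℝ | ∃ V : Ω → ℝ,
      (∀ ω, 0 < V ω) ∧ (∑ ω, Pt ω * (V ω / R)) = v ∧
      x = ∑ ω, Q ω * U (V ω)} := by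
    intro Q hQ
    refine ⟨∑ ω, Q ω * U (v * R / Pt ω), ?_⟩
    rintro x ⟨V, hVpos, hVbud, rfl⟩
    refine Finset.sum_le_sum fun ω _ => ?_
    refine mul_le_mul_of_nonneg_left ?_ (hQ ω)
    have hB : (0:ℝ) < v * R / Pt ω := div_pos (mul_pos hv hR) (hPt ω)
    exact hUmono.monotoneOn (hVpos ω) hB (hVbd V hVpos hVbud ω)
  -- key comparison: for Q ∈ Eν and feasible V, there is a feasible V̄ with
  -- ∑ Pν U(V) ≤ ∑ Q U(V̄)
  have hkey : ∀ Q ∈ Eν, ∀ V : Ω → ℝ, (∀ ω, 0 < V ω) → (∑ ω, Pt ω * (V ω / R)) = v →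
      ∃ Vb : Ω → ℝ, (∀ ω, 0 < Vb ω) ∧ (∑ ω, Pt ω * (Vb ω / R)) = v ∧
        ∑ ω, Pν ω * U (V ω) ≤ ∑ ω, Q ω * U (Vb ω) := by
    rintro Q ⟨hQpos, hQ1, hQmarg⟩ V hVpos hVbud
    set W : A → ℝ := fun a => (∑ ω ∈ univ.filter (fun ω' => S ω' = a), Pt ω * V ω) / T a
      with hWdef
    refine ⟨fun ω => W (S ω), ?_, ?_, ?_⟩
    · -- positivity
      intro ω
      refine div_pos ?_ (hTposS ω)
      refine Finset.sum_pos' (fun i _ => mul_nonneg (hPt i).le (hVpos i).le)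
        ⟨ω, hmemfib ω, mul_pos (hPt ω) (hVpos ω)⟩
    · -- budget
      have hsum : ∑ ω, Pt ω * W (S ω) = ∑ ω, Pt ω * V ω := by
        rw [← Finset.sum_fiberwise univ S (fun ω => Pt ω * W (S ω)),
            ← Finset.sum_fiberwise univ S (fun ω => Pt ω * V ω)]
        refine Finset.sum_congr rfl fun a _ => ?_
        by_cases ha : (univ.filter (fun ω => S ω = a)).Nonempty
        · have hTa : 0 < T a := hTpos a ha
          have h1 : ∑ ω ∈ univ.filter (fun ω => S ω = a), Pt ω * W (S ω)
              = ∑ ω ∈ univ.filter (fun ω => S ω = a), Pt ω * W a := by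
            refine Finset.sum_congr rfl fun ω hω => ?_
            rw [(Finset.mem_filter.mp hω).2]
          rw [h1, ← Finset.sum_mul]
          show T a * W a = _
          rw [show W a = (∑ ω ∈ univ.filter (fun ω' => S ω' = a), Pt ω * V ω) / T a from rfl,
            mul_comm, div_mul_cancel₀ _ hTa.ne']
        · rw [Finset.not_nonempty_iff_eq_empty.mp ha]
          simp
      calc ∑ ω, Pt ω * (W (S ω) / R) = (∑ ω, Pt ω * W (S ω)) / R := by
            rw [Finset.sum_div]
            exact Finset.sum_congr rfl fun ω _ => (mul_div_assoc _ _ _).symm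
        _ = (∑ ω, Pt ω * V ω) / R := by rw [hsum]
        _ = ∑ ω, Pt ω * (V ω / R) := by
            rw [Finset.sum_div]
            exact Finset.sum_congr rfl fun ω _ => (mul_div_assoc _ _ _)
        _ = v := hVbud
    · -- utility comparison via Jensen
      rw [← Finset.sum_fiberwise univ S (fun ω => Pν ω * U (V ω)),
          ← Finset.sum_fiberwise univ S (fun ω => Q ω * U (W (S ω)))]
      refine Finset.sum_le_sum fun a _ => ?_
      by_cases ha : (univ.filter (fun ω => S ω = a)).Nonempty
      · have hTa : 0 < T a := hTpos a ha
        have hQside : ∑ ω ∈ univ.filter (fun ω => S ω = a), Q ω * U (W (S ω))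
            = ν a * U (W a) := by
          have h1 : ∑ ω ∈ univ.filter (fun ω => S ω = a), Q ω * U (W (S ω))
              = ∑ ω ∈ univ.filter (fun ω => S ω = a), Q ω * U (W a) := by
            refine Finset.sum_congr rfl fun ω hω => ?_
            rw [(Finset.mem_filter.mp hω).2]
          rw [h1, ← Finset.sum_mul, hQmarg a]
        rw [hQside]
        have hPside : ∑ ω ∈ univ.filter (fun ω => S ω = a), Pν ω * U (V ω)
            = ν a * ∑ ω ∈ univ.filter (fun ω => S ω = a), (Pt ω / T a) * U (V ω) := by
          rw [Finset.mul_sum]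
          refine Finset.sum_congr rfl fun ω hω => ?_
          rw [hPν' ω, (Finset.mem_filter.mp hω).2]
          ring
        rw [hPside]
        refine mul_le_mul_of_nonneg_left ?_ (hν a)
        -- Jensen's inequality on the fiber
        have hjen := hUconc.concaveOn.le_map_sum
          (t := univ.filter (fun ω => S ω = a)) (w := fun ω => Pt ω / T a) (p := V)
          (fun i _ => div_nonneg (hPt i).le hTa.le)
          (by rw [← Finset.sum_div]; exact div_self hTa.ne')
          (fun i _ => hVpos i)
        have hWa : ∑ i ∈ univ.filter (fun ω => S ω = a), (Pt i / T a) • V i = W a := by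
          rw [show W a = (∑ ω ∈ univ.filter (fun ω' => S ω' = a), Pt ω * V ω) / T a from rfl,
            Finset.sum_div]
          exact Finset.sum_congr rfl fun i _ => by
            rw [smul_eq_mul, div_mul_eq_mul_div]
        rw [hWa] at hjen
        simpa only [smul_eq_mul] using hjen
      · rw [Finset.not_nonempty_iff_eq_empty.mp ha]
        simp
  -- conclusion
  refine ⟨hPνmem, ⟨Pν, hPνmem, rfl⟩, ?_⟩
  rintro y ⟨Q, hQmem, rfl⟩
  show sSup _ ≤ sSup _
  refine csSup_le (hne Pν) ?_
  rintro x ⟨V, hVpos, hVbud, rfl⟩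
  obtain ⟨Vb, hVbpos, hVbbud, hle⟩ := hkey Q hQmem V hVpos hVbud
  exact le_trans hle (le_csSup (hbdd Q fun ω => (hQmem.1 ω).le) ⟨Vb, hVbpos, hVbbud, rfl⟩)
end

section
/- For exponential utility U(x) = −e^{−αx} (α > 0) in an N-period binomial model with risk-neutral up-probability p̃ (and q̃ = 1 − p̃), terminal anticipation ν = (ν₀,…,ν_N) on the number of down-moves, and minimal measure P^ν, the optimal expected utility is u(v,ν) = −exp(−vα(1+r)^N − Σ_{i=0}^{N} C(N,i) p̃^{N−i} q̃^i ln(C(N,i) p̃^{N−i} q̃^i / ν_i)). -/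
open Finset

/-- Value of weak information for exponential utility
`U(x) = -e^{-αx}` in the N-period binomial model:
`u(v,ν) = -exp(-vα(1+r)^N - Σᵢ C(N,i) p̃^{N-i} q̃^i ln(C(N,i) p̃^{N-i} q̃^i / νᵢ))`. -/
theorem stmt_19 (N : ℕ) (p q : ℝ) (hp : 0 < p) (hp1 : p < 1) (hq : q = 1 - p)
    (ν : ℕ → ℝ) (hν : ∀ i, i ≤ N → 0 < ν i) (hν1 : ∑ i ∈ range (N + 1), ν i = 1)
    (α v r : ℝ) (hα : 0 < α) (hr : r > -1) :
    -- number of down-moves in a path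
    let d : (Fin N → Bool) → ℕ := fun ω => (univ.filter (fun t => ω t = false)).card
    -- i.i.d. risk-neutral measure with up-probability p
    let Pt : (Fin N → Bool) → ℝ := fun ω => p ^ (N - d ω) * q ^ (d ω)
    -- minimal measure: P̃ conditioned on the number of down-moves, reweighted by ν
    let Pν : (Fin N → Bool) → ℝ := fun ω =>
      Pt ω * ν (d ω) / (∑ ω' ∈ univ.filter (fun ω' => d ω' = d ω), Pt ω')
    -- inverse marginal utility
    let I : ℝ → ℝ := fun y => -(1 / α) * Real.log (y / α)
    ∀ lam : ℝ, 0 < lam →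
      -- budget constraint determining the multiplier
      (∑ ω, Pt ω * (((1 + r) ^ N)⁻¹ *
        I (lam * ((1 + r) ^ N)⁻¹ * (Pt ω / Pν ω)))) = v →
      -- optimal expected utility
      ∑ ω, Pν ω * (-Real.exp (-α * I (lam * ((1 + r) ^ N)⁻¹ * (Pt ω / Pν ω))))
        = -Real.exp (-v * α * (1 + r) ^ N -
            ∑ i ∈ range (N + 1), (N.choose i : ℝ) * p ^ (N - i) * q ^ i *
              Real.log ((N.choose i : ℝ) * p ^ (N - i) * q ^ i / ν i)) := by
  intro d Pt Pν I lam hlam hbudget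
  have hq0 : 0 < q := by rw [hq]; linarith
  have hR : (0:ℝ) < (1 + r) ^ N := pow_pos (by linarith) N
  set R : ℝ := (1 + r) ^ N with hRdef
  set c : ℝ := lam * R⁻¹ / α with hcdef
  have hc : 0 < c := by positivity
  set S : ℕ → ℝ := fun i => (N.choose i : ℝ) * p ^ (N - i) * q ^ i with hSdef
  have hdle : ∀ ω : Fin N → Bool, d ω ≤ N := by
    intro ω
    have := card_filter_le (univ : Finset (Fin N)) (fun t => ω t = false)
    simpa using this
  have hνd : ∀ ω, 0 < ν (d ω) := fun ω => hν _ (hdle ω)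
  have hPtpos : ∀ ω, 0 < Pt ω := fun ω => mul_pos (pow_pos hp _) (pow_pos hq0 _)
  have hSpos : ∀ i, i ≤ N → 0 < S i := fun i hi =>
    mul_pos (mul_pos (by exact_mod_cast Nat.choose_pos hi) (pow_pos hp _)) (pow_pos hq0 _)
  -- cardинality of the fibers of d
  have hcard : ∀ i : ℕ,
      ((univ : Finset (Fin N → Bool)).filter (fun ω => d ω = i)).card = N.choose i := by
    intro i
    have hpc : ((univ : Finset (Fin N)).powersetCard i).card = N.choose i := by
      simp [Finset.card_powersetCard]
    rw [← hpc]
    refine Finset.card_bij' (fun ω _ => univ.filter (fun t => ω t = false))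
      (fun s _ => fun t => decide (t ∉ s)) ?_ ?_ ?_ ?_
    · intro ω hω
      simp only [mem_filter, mem_univ, true_and] at hω
      simp only [Finset.mem_powersetCard]
      exact ⟨Finset.subset_univ _, hω⟩
    · intro s hs
      simp only [mem_filter, mem_univ, true_and]
      simp only [Finset.mem_powersetCard] at hs
      have : (univ.filter fun t => (decide (t ∉ s) : Bool) = false) = s := by
        ext t; simp
      show d _ = i
      simp only [d]
      rw [this]
      exact hs.2
    · intro ω hω
      funext t
      cases h : ω t <;> simp [h]
    · intro s hs
      ext t
      simp
  -- grouping sums over paths by the number of down-moves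
  have hgroup : ∀ G : ℕ → ℝ,
      (∑ ω : Fin N → Bool, G (d ω)) = ∑ i ∈ range (N + 1), (N.choose i : ℝ) * G i := by
    intro G
    rw [← Finset.sum_fiberwise_of_maps_to
      (g := d) (t := range (N + 1))
      (fun ω _ => mem_range.2 (Nat.lt_succ_of_le (hdle ω))) (fun ω => G (d ω))]
    refine Finset.sum_congr rfl fun i _ => ?_
    rw [Finset.sum_congr rfl (fun ω hω => by rw [(mem_filter.1 hω).2]),
      sum_const, hcard i, nsmul_eq_mul]
  have hgroupPt : ∀ F : ℕ → ℝ,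
      (∑ ω : Fin N → Bool, Pt ω * F (d ω)) = ∑ i ∈ range (N + 1), S i * F i := by
    intro F
    have h := hgroup (fun i => p ^ (N - i) * q ^ i * F i)
    rw [show (∑ ω : Fin N → Bool, Pt ω * F (d ω))
        = ∑ ω : Fin N → Bool, (fun i => p ^ (N - i) * q ^ i * F i) (d ω) from rfl, h]
    exact Finset.sum_congr rfl fun i _ => by simp only [hSdef]; ring
  have hone : ∑ i ∈ range (N + 1), S i = 1 := by
    have h1 := add_pow q p N
    rw [show q + p = 1 by rw [hq]; ring, one_pow] at h1
    rw [h1]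
    exact Finset.sum_congr rfl fun i _ => by simp only [hSdef]; ring
  -- fiber sums of Pt
  have hfib : ∀ ω : Fin N → Bool,
      (∑ ω' ∈ univ.filter (fun ω' => d ω' = d ω), Pt ω') = S (d ω) := by
    intro ω
    rw [Finset.sum_congr rfl (fun ω' hω' => show Pt ω' = p ^ (N - d ω) * q ^ (d ω) by
        rw [show Pt ω' = p ^ (N - d ω') * q ^ (d ω') from rfl, (mem_filter.1 hω').2]),
      sum_const, hcard (d ω), nsmul_eq_mul]
    simp only [hSdef]; ring
  have hPν : ∀ ω, Pν ω = Pt ω * ν (d ω) / S (d ω) := by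
    intro ω
    rw [show Pν ω = Pt ω * ν (d ω) / (∑ ω' ∈ univ.filter (fun ω' => d ω' = d ω), Pt ω')
      from rfl, hfib ω]
  have hPνpos : ∀ ω, 0 < Pν ω := fun ω => by
    rw [hPν ω]
    exact div_pos (mul_pos (hPtpos ω) (hνd ω)) (hSpos _ (hdle ω))
  have hratio : ∀ ω, Pt ω / Pν ω = S (d ω) / ν (d ω) := by
    intro ω
    rw [hPν ω]
    have h1 := (hPtpos ω).ne'
    have h2 := (hνd ω).ne'
    have h3 := (hSpos _ (hdle ω)).ne'
    field_simp
  have hI : ∀ ω : Fin N → Bool, I (lam * R⁻¹ * (Pt ω / Pν ω))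
      = -(1 / α) * (Real.log c + Real.log (S (d ω) / ν (d ω))) := by
    intro ω
    have hSν : 0 < S (d ω) / ν (d ω) := div_pos (hSpos _ (hdle ω)) (hνd ω)
    rw [show I (lam * R⁻¹ * (Pt ω / Pν ω))
        = -(1 / α) * Real.log (lam * R⁻¹ * (Pt ω / Pν ω) / α) from rfl, hratio ω]
    congr 1
    rw [show lam * R⁻¹ * (S (d ω) / ν (d ω)) / α = c * (S (d ω) / ν (d ω)) by
        rw [hcdef]; ring,
      Real.log_mul hc.ne' hSν.ne']
  have hexp : ∀ ω : Fin N → Bool,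
      Real.exp (-α * I (lam * R⁻¹ * (Pt ω / Pν ω))) = c * (S (d ω) / ν (d ω)) := by
    intro ω
    rw [hI ω]
    have h : -α * (-(1 / α) * (Real.log c + Real.log (S (d ω) / ν (d ω))))
        = Real.log c + Real.log (S (d ω) / ν (d ω)) := by
      field_simp
    rw [h, Real.exp_add, Real.exp_log hc,
      Real.exp_log (div_pos (hSpos _ (hdle ω)) (hνd ω))]
  have hPtsum : ∑ ω : Fin N → Bool, Pt ω = 1 := by
    have h := hgroup (fun i => p ^ (N - i) * q ^ i)
    rw [show (∑ ω : Fin N → Bool, Pt ω)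
        = ∑ ω : Fin N → Bool, (fun i => p ^ (N - i) * q ^ i) (d ω) from rfl, h, ← hone]
    exact Finset.sum_congr rfl fun i _ => by simp only [hSdef]; ring
  -- the left-hand side equals -c
  have hLHS : (∑ ω : Fin N → Bool, Pν ω * (-Real.exp (-α * I (lam * R⁻¹ * (Pt ω / Pν ω)))))
      = -c := by
    have hterm : ∀ ω : Fin N → Bool,
        Pν ω * (-Real.exp (-α * I (lam * R⁻¹ * (Pt ω / Pν ω)))) = -c * Pt ω := by
      intro ω
      rw [hexp ω, ← hratio ω]
      have hPνne : Pν ω ≠ 0 := (hPνpos ω).ne'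
      field_simp
    rw [Finset.sum_congr rfl (fun ω _ => hterm ω), ← Finset.mul_sum, hPtsum, mul_one]
  -- rewrite the budget constraint
  have hb2 : -(R⁻¹ / α) * (Real.log c + ∑ i ∈ range (N + 1), S i * Real.log (S i / ν i))
      = v := by
    have hb1 : (∑ ω : Fin N → Bool, Pt ω * (R⁻¹ * I (lam * R⁻¹ * (Pt ω / Pν ω))))
        = ∑ i ∈ range (N + 1),
            S i * (R⁻¹ * (-(1 / α) * (Real.log c + Real.log (S i / ν i)))) := by
      rw [← hgroupPt (fun i => R⁻¹ * (-(1 / α) * (Real.log c + Real.log (S i / ν i))))]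
      exact Finset.sum_congr rfl fun ω _ => by rw [hI ω]
    rw [← hbudget, hb1]
    rw [Finset.sum_congr rfl (fun i (_ : i ∈ range (N + 1)) => show
        S i * (R⁻¹ * (-(1 / α) * (Real.log c + Real.log (S i / ν i))))
        = -(R⁻¹ / α) * (Real.log c * S i + S i * Real.log (S i / ν i)) by ring),
      ← Finset.mul_sum, Finset.sum_add_distrib, ← Finset.mul_sum, hone, mul_one]
  -- conclude
  rw [hLHS]
  have hK : (∑ i ∈ range (N + 1), (N.choose i : ℝ) * p ^ (N - i) * q ^ i *
      Real.log ((N.choose i : ℝ) * p ^ (N - i) * q ^ i / ν i))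
      = ∑ i ∈ range (N + 1), S i * Real.log (S i / ν i) := rfl
  rw [hK, ← hb2]
  have hRne : R ≠ 0 := hR.ne'
  have : -(-(R⁻¹ / α) * (Real.log c + ∑ i ∈ range (N + 1), S i * Real.log (S i / ν i))) * α * R
      - ∑ i ∈ range (N + 1), S i * Real.log (S i / ν i) = Real.log c := by
    field_simp
    ring
  rw [this, Real.exp_log hc]
end
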